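/- Let p ∤ a₁ and p ∤ a₂, with roots c₁ = -b₁/a₁ and c₂ = -b₂/a₂ in ℤ_p, and suppose c₁ ≡ c₂ (mod p^r) but c₁ ≢ c₂ (mod p^{r+1}). Let k ≥ r+1 and let m ∈ ℕ satisfy m ≡ c₁ (mod p^k) and m ≢ c₁ (mod p^{k+1}). Then for all n ≡ m (mod p^{k+1}), the p-adic valuation of (a₁n+b₁)(a₂n+b₂) equals k + r. -/

import Mathlib

/-!
Write `v` for the multiplicity of `p` in `ℤ_[p]`. Since `p ∤ aᵢ`, `aᵢ` is a unit and
`aᵢ n + bᵢ = aᵢ (n - cᵢ)`, so `v (aᵢ n + bᵢ) = v (n - cᵢ)`. By hypothesis `v (n - c₁) = k`, and as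
`k > r = v (c₁ - c₂)`, the ultrametric inequality is strict in `n - c₂ = (n - c₁) + (c₁ - c₂)`,
giving `v (n - c₂) = r`. Since `p` is prime in `ℤ_[p]`, the valuations of the two factors add up
to `k + r`, and divisibility by powers of `p` is the same in `ℤ` and in `ℤ_[p]`.
-/

theorem emultiplicity_sub_eq_of_lt {R : Type*} [CommRing R] {π x c₁ c₂ : R}
    (h : emultiplicity π (c₁ - c₂) < emultiplicity π (x - c₁)) :
    emultiplicity π (x - c₂) = emultiplicity π (c₁ - c₂) := by
  rw [← emultiplicity_add_of_gt h, sub_add_sub_cancel]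

namespace PadicInt

variable {p : ℕ} [Fact p.Prime]

theorem emultiplicity_intCast (z : ℤ) :
    emultiplicity (p : ℤ_[p]) (z : ℤ_[p]) = emultiplicity (p : ℤ) z :=
  emultiplicity_eq_emultiplicity_iff.2 fun n => pow_p_dvd_int_iff n z

theorem emultiplicity_intCast_eq_zero {a : ℤ} (ha : ¬ (p : ℤ) ∣ a) :
    emultiplicity (p : ℤ_[p]) (a : ℤ_[p]) = 0 := by
  rwa [emultiplicity_intCast, emultiplicity_eq_zero]

theorem emultiplicity_linear_eq {a b : ℤ} (ha : ¬ (p : ℤ) ∣ a) {c : ℤ_[p]}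
    (hc : (a : ℤ_[p]) * c + b = 0) (x : ℤ_[p]) :
    emultiplicity (p : ℤ_[p]) (a * x + b) = emultiplicity (p : ℤ_[p]) (x - c) := by
  have hfactor : (a : ℤ_[p]) * x + b = a * (x - c) := by linear_combination hc
  rw [hfactor, emultiplicity_mul prime_p, emultiplicity_intCast_eq_zero ha, zero_add]

end PadicInt

theorem padicValInt_eq_of_emultiplicity_eq {p : ℕ} [Fact p.Prime] {z : ℤ} {m : ℕ}
    (h : emultiplicity (p : ℤ) z = m) : padicValInt p z = m := by
  obtain ⟨hdvd, hndvd⟩ := emultiplicity_eq_coe.1 h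
  rw [padicValInt_dvd_iff] at hdvd hndvd
  omega

theorem stmt_9_general (p : ℕ) [hp : Fact p.Prime] (a₁ b₁ a₂ b₂ : ℤ)
    (hpa₁ : ¬ (p : ℤ) ∣ a₁) (hpa₂ : ¬ (p : ℤ) ∣ a₂)
    (c₁ c₂ : ℤ_[p]) (hc₁ : (a₁ : ℤ_[p]) * c₁ + (b₁ : ℤ_[p]) = 0)
    (hc₂ : (a₂ : ℤ_[p]) * c₂ + (b₂ : ℤ_[p]) = 0)
    (r : ℕ) (hr1 : (p : ℤ_[p]) ^ r ∣ (c₁ - c₂)) (hr2 : ¬ (p : ℤ_[p]) ^ (r + 1) ∣ (c₁ - c₂))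
    (k : ℕ) (hk : r + 1 ≤ k) (n : ℕ)
    (hn1 : (p : ℤ_[p]) ^ k ∣ ((n : ℤ_[p]) - c₁))
    (hn2 : ¬ (p : ℤ_[p]) ^ (k + 1) ∣ ((n : ℤ_[p]) - c₁)) :
    padicValInt p ((a₁ * (n : ℤ) + b₁) * (a₂ * (n : ℤ) + b₂)) = k + r := by
  have hv₁ : emultiplicity (p : ℤ_[p]) ((n : ℤ_[p]) - c₁) = k := emultiplicity_eq_coe.2 ⟨hn1, hn2⟩
  have hr : emultiplicity (p : ℤ_[p]) (c₁ - c₂) = r := emultiplicity_eq_coe.2 ⟨hr1, hr2⟩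
  have hv₂ : emultiplicity (p : ℤ_[p]) ((n : ℤ_[p]) - c₂) = r := by
    rw [emultiplicity_sub_eq_of_lt (by rw [hr, hv₁]; exact_mod_cast hk), hr]
  apply padicValInt_eq_of_emultiplicity_eq
  rw [← PadicInt.emultiplicity_intCast]
  push_cast
  rw [emultiplicity_mul PadicInt.prime_p, PadicInt.emultiplicity_linear_eq hpa₁ hc₁,
    PadicInt.emultiplicity_linear_eq hpa₂ hc₂, hv₁, hv₂]

theorem stmt_9 (p : ℕ) [hp : Fact p.Prime] (a₁ b₁ a₂ b₂ : ℤ)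
    (hab₁ : Int.gcd a₁ b₁ = 1) (hab₂ : Int.gcd a₂ b₂ = 1)
    (hpa₁ : ¬ (p : ℤ) ∣ a₁) (hpa₂ : ¬ (p : ℤ) ∣ a₂)
    (c₁ c₂ : ℤ_[p]) (hc₁ : (a₁ : ℤ_[p]) * c₁ + (b₁ : ℤ_[p]) = 0)
    (hc₂ : (a₂ : ℤ_[p]) * c₂ + (b₂ : ℤ_[p]) = 0) (hne : c₁ ≠ c₂)
    (r : ℕ) (hr1 : (p : ℤ_[p]) ^ r ∣ (c₁ - c₂)) (hr2 : ¬ (p : ℤ_[p]) ^ (r + 1) ∣ (c₁ - c₂))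
    (k : ℕ) (hk : r + 1 ≤ k) (n : ℕ)
    (hn1 : (p : ℤ_[p]) ^ k ∣ ((n : ℤ_[p]) - c₁))
    (hn2 : ¬ (p : ℤ_[p]) ^ (k + 1) ∣ ((n : ℤ_[p]) - c₁)) :
    padicValInt p ((a₁ * (n : ℤ) + b₁) * (a₂ * (n : ℤ) + b₂)) = k + r :=
  stmt_9_general p (hp := hp) a₁ b₁ a₂ b₂ hpa₁ hpa₂ c₁ c₂ hc₁ hc₂ r hr1 hr2 k hk n hn1 hn2
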